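/- (Arbitrary impulse sequences.) Let A, J be real n×n matrices and suppose there exists a real symmetric positive definite n×n matrix P such that AᵀP + PA is negative definite and JᵀPJ − P is negative definite. Then ℐ(P,A,J,s) is negative definite for every s ≥ 0, and consequently for every sequence (T_k)_{k∈ℕ} of positive reals and every x₀ ∈ ℝⁿ, the sequence defined by x_{k+1} = exp(T_k·A)·J·x_k, x_0 = x₀, satisfies x_{k+1}ᵀP x_{k+1} < x_kᵀP x_k whenever x_k ≠ 0. -/

import Mathlib

open Matrix Filter

/-- Matrix exponential of a real square matrix. -/
noncomputable def mexp {n : ℕ} (A : Matrix (Fin n) (Fin n) ℝ) : Matrix (Fin n) (Fin n) ℝ :=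
  NormedSpace.exp A

/-- ℐ(P,A,J,T) := Jᵀ·exp(T·Aᵀ)·P·exp(T·A)·J − P. -/
noncomputable def scrI {n : ℕ} (P A J : Matrix (Fin n) (Fin n) ℝ) (T : ℝ) :
    Matrix (Fin n) (Fin n) ℝ :=
  Jᵀ * mexp (T • Aᵀ) * P * mexp (T • A) * J - P

/-- xᵀMx < 0 for all x ≠ 0. -/
def negDef {m : Type*} [Fintype m] (M : Matrix m m ℝ) : Prop :=
  ∀ x : m → ℝ, x ≠ 0 → x ⬝ᵥ M.mulVec x < 0

/-- xᵀMx > 0 for all x ≠ 0. -/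
def posDef {m : Type*} [Fintype m] (M : Matrix m m ℝ) : Prop :=
  ∀ x : m → ℝ, x ≠ 0 → 0 < x ⬝ᵥ M.mulVec x

/-- xᵀMx ≥ 0 for all x. -/
def posSemidef {m : Type*} [Fintype m] (M : Matrix m m ℝ) : Prop :=
  ∀ x : m → ℝ, 0 ≤ x ⬝ᵥ M.mulVec x

/-!
Along the flow `y(t) = exp(tA) x` the Lyapunov function `V(y) = yᵀPy` has derivative
`y(t)ᵀ(AᵀP + PA)y(t) ≤ 0`, so `V(exp(sA) y) ≤ V(y)` for `s ≥ 0`. Since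
`xᵀ ℐ(P,A,J,s) x = V(exp(sA) J x) - V(x) ≤ V(J x) - V(x) = xᵀ(JᵀPJ - P)x`, the jump condition
makes `ℐ(P,A,J,s)` negative definite, and one step of the impulsive system changes `V(x_k)` by
exactly `x_kᵀ ℐ(P,A,J,T_k) x_k`.
-/

section QuadraticForm

variable {m : Type*} [Fintype m]

lemma dotProduct_transpose_mul_mul_mulVec {R : Type*} [CommSemiring R] (M P : Matrix m m R)
    (x : m → R) : x ⬝ᵥ (Mᵀ * P * M) *ᵥ x = (M *ᵥ x) ⬝ᵥ P *ᵥ (M *ᵥ x) := by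
  rw [← mulVec_mulVec, ← mulVec_mulVec, dotProduct_mulVec, vecMul_transpose]

lemma negDef.dotProduct_mulVec_nonpos {M : Matrix m m ℝ} (hM : negDef M) (x : m → ℝ) :
    x ⬝ᵥ M *ᵥ x ≤ 0 := by
  rcases eq_or_ne x 0 with rfl | hx
  · simp
  · exact (hM x hx).le

end QuadraticForm

section Flow

variable {m : Type*} [Fintype m] [DecidableEq m]

open NormedSpace

attribute [local instance] Matrix.linftyOpNormedRing Matrix.linftyOpNormedAlgebra

lemma hasDerivAt_exp_smul_transpose_mul_mul_exp_smul (A P : Matrix m m ℝ) (t : ℝ) :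
    HasDerivAt (fun s : ℝ => exp (s • Aᵀ) * P * exp (s • A))
      (exp (t • Aᵀ) * (Aᵀ * P + P * A) * exp (t • A)) t := by
  refine (((hasDerivAt_exp_smul_const Aᵀ t).mul_const P).mul
    (hasDerivAt_exp_smul_const' A t)).congr_deriv ?_
  simp only [Matrix.mul_add, Matrix.add_mul, Matrix.mul_assoc]
  -- the sides differ only in whether `+` comes from `Matrix.linftyOpNormedRing`
  rfl

lemma dotProduct_exp_smul_mulVec_le {A P : Matrix m m ℝ} (hC : negDef (Aᵀ * P + P * A))
    (x : m → ℝ) {s : ℝ} (hs : 0 ≤ s) :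
    (exp (s • A) *ᵥ x) ⬝ᵥ P *ᵥ (exp (s • A) *ᵥ x) ≤ x ⬝ᵥ P *ᵥ x := by
  let quadAt : Matrix m m ℝ →L[ℝ] ℝ := LinearMap.toContinuousLinearMap
    { toFun := fun M => x ⬝ᵥ M *ᵥ x
      map_add' := fun M N => by simp [add_mulVec, dotProduct_add]
      map_smul' := fun c M => by simp [smul_mulVec, dotProduct_smul] }
  have hV : Antitone fun s : ℝ => x ⬝ᵥ (exp (s • Aᵀ) * P * exp (s • A)) *ᵥ x :=
    antitone_of_hasDerivAt_nonpos
      (f' := fun t => x ⬝ᵥ (exp (t • Aᵀ) * (Aᵀ * P + P * A) * exp (t • A)) *ᵥ x)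
      (fun t => quadAt.hasFDerivAt.comp_hasDerivAt t
        (hasDerivAt_exp_smul_transpose_mul_mul_exp_smul A P t))
      fun t => by
        simp only [Pi.zero_apply]
        rw [← transpose_smul, exp_transpose, dotProduct_transpose_mul_mul_mulVec]
        exact hC.dotProduct_mulVec_nonpos _
  simpa [← transpose_smul, exp_transpose, dotProduct_transpose_mul_mul_mulVec] using hV hs

end Flow

lemma dotProduct_scrI_mulVec {n : ℕ} (P A J : Matrix (Fin n) (Fin n) ℝ) (T : ℝ)
    (x : Fin n → ℝ) :
    x ⬝ᵥ scrI P A J T *ᵥ x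
      = ((mexp (T • A) * J) *ᵥ x) ⬝ᵥ P *ᵥ ((mexp (T • A) * J) *ᵥ x) - x ⬝ᵥ P *ᵥ x := by
  have hT : mexp (T • Aᵀ) = (mexp (T • A))ᵀ := by
    rw [mexp, mexp, ← transpose_smul, exp_transpose]
  rw [← dotProduct_transpose_mul_mul_mulVec, scrI, hT, sub_mulVec, dotProduct_sub,
    transpose_mul]
  simp only [Matrix.mul_assoc]

lemma negDef_scrI {n : ℕ} {P A J : Matrix (Fin n) (Fin n) ℝ} (hC : negDef (Aᵀ * P + P * A))
    (hD : negDef (Jᵀ * P * J - P)) {s : ℝ} (hs : 0 ≤ s) : negDef (scrI P A J s) := by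
  intro x hx
  have hflow := dotProduct_exp_smul_mulVec_le hC (J *ᵥ x) hs
  have hjump := hD x hx
  rw [sub_mulVec, dotProduct_sub, dotProduct_transpose_mul_mul_mulVec] at hjump
  rw [dotProduct_scrI_mulVec, ← mulVec_mulVec]
  exact lt_of_le_of_lt (sub_le_sub_right hflow _) hjump

theorem stmt3_general {n : ℕ} (A J : Matrix (Fin n) (Fin n) ℝ)
    (P : Matrix (Fin n) (Fin n) ℝ)
    (hC : negDef (Aᵀ * P + P * A)) (hD : negDef (Jᵀ * P * J - P)) :
    (∀ s : ℝ, 0 ≤ s → negDef (scrI P A J s)) ∧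
    (∀ Tk : ℕ → ℝ, (∀ k, 0 < Tk k) →
      ∀ x₀ : Fin n → ℝ, ∀ x : ℕ → Fin n → ℝ, x 0 = x₀ →
        (∀ k, x (k + 1) = (mexp (Tk k • A) * J).mulVec (x k)) →
        ∀ k, x k ≠ 0 →
          (x (k + 1)) ⬝ᵥ P.mulVec (x (k + 1)) < (x k) ⬝ᵥ P.mulVec (x k)) := by
  refine ⟨fun s hs => negDef_scrI hC hD hs, fun Tk hTk x₀ x _ hstep k hk => ?_⟩
  have hdecrease := negDef_scrI hC hD (hTk k).le (x k) hk
  rw [dotProduct_scrI_mulVec, ← hstep k] at hdecrease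
  exact sub_neg.mp hdecrease

/-- Arbitrary impulse sequences: if `P ≻ 0` is symmetric with `AᵀP + PA ≺ 0`
and `JᵀPJ − P ≺ 0`, then `ℐ(P,A,J,s) ≺ 0` for all `s ≥ 0`, and along any impulsive trajectory
with positive dwell-times the Lyapunov value `xᵀPx` strictly decreases at each step where the
state is nonzero. -/
theorem stmt3 {n : ℕ} (A J : Matrix (Fin n) (Fin n) ℝ)
    (P : Matrix (Fin n) (Fin n) ℝ) (hPsym : P.IsSymm) (hP : posDef P)
    (hC : negDef (Aᵀ * P + P * A)) (hD : negDef (Jᵀ * P * J - P)) :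
    (∀ s : ℝ, 0 ≤ s → negDef (scrI P A J s)) ∧
    (∀ Tk : ℕ → ℝ, (∀ k, 0 < Tk k) →
      ∀ x₀ : Fin n → ℝ, ∀ x : ℕ → Fin n → ℝ, x 0 = x₀ →
        (∀ k, x (k + 1) = (mexp (Tk k • A) * J).mulVec (x k)) →
        ∀ k, x k ≠ 0 →
          (x (k + 1)) ⬝ᵥ P.mulVec (x (k + 1)) < (x k) ⬝ᵥ P.mulVec (x k)) :=
  stmt3_general A J P hC hD
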